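/- arXiv:1601.07254 — 8 statements merged into one kernel-verified Lean document; each statement's English description precedes it below -/
import Mathlib

section
/- Let n ≥ 1, let σ₀ > 0 and let u₀, v₀ ∈ ℝ^n be unit ℓ₂-norm vectors, and set H = σ₀ u₀ v₀ᵀ ∈ ℝ^{n×n}. Let Ĥ ∈ ℝ^{n×n} admit a singular triple (σ, u, v) where σ is the largest singular value of Ĥ. If ‖H − Ĥ‖_F ≤ ζ ≤ σ, then ⟨u₀, u⟩ · ⟨v₀, v⟩ ≥ η(σ, σ₀, ζ). -/
open scoped BigOperators

/-- Euclidean (ℓ₂) norm of a vector in ℝⁿ. -/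
noncomputable def l2norm {n : ℕ} (x : Fin n → ℝ) : ℝ := Real.sqrt (∑ i, x i ^ 2)

/-- Standard inner product on ℝⁿ. -/
noncomputable def inprod {n : ℕ} (x y : Fin n → ℝ) : ℝ := ∑ i, x i * y i

/-- Frobenius norm of a real matrix. -/
noncomputable def frob {m n : ℕ} (M : Matrix (Fin m) (Fin n) ℝ) : ℝ :=
  Real.sqrt (∑ i, ∑ j, M i j ^ 2)

/-- `(σ, u, v)` is a singular triple of `M`: σ ≥ 0, u, v unit vectors, M v = σ u, Mᵀ u = σ v. -/
def SingularTriple {n : ℕ} (M : Matrix (Fin n) (Fin n) ℝ) (σ : ℝ) (u v : Fin n → ℝ) : Prop :=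
  0 ≤ σ ∧ l2norm u = 1 ∧ l2norm v = 1 ∧ M.mulVec v = σ • u ∧ M.transpose.mulVec u = σ • v

/-- The rank-one matrix H = σ₀ u₀ v₀ᵀ. -/
noncomputable def outerH {n : ℕ} (σ₀ : ℝ) (u₀ v₀ : Fin n → ℝ) : Matrix (Fin n) (Fin n) ℝ :=
  Matrix.of fun i j => σ₀ * u₀ i * v₀ j

/-- η(σ, σ₀, ζ) := (1 − σ/σ₀) + √((1 − σ/σ₀)² + (σ/σ₀)² − (ζ/σ₀)²). -/
noncomputable def eta (σ σ₀ ζ : ℝ) : ℝ :=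
  (1 - σ / σ₀) + Real.sqrt ((1 - σ / σ₀) ^ 2 + (σ / σ₀) ^ 2 - (ζ / σ₀) ^ 2)

section helpers
variable {n : ℕ}

lemma bessel_one (v r : Fin n → ℝ) (hv : ∑ i, v i ^ 2 = 1) :
    (∑ i, r i * v i) ^ 2 ≤ ∑ i, r i ^ 2 := by
  set α : ℝ := ∑ i, r i * v i with hα
  have expand : ∀ i ∈ Finset.univ, (r i - α * v i) ^ 2
      = r i ^ 2 - (2 * α) * (r i * v i) + α ^ 2 * v i ^ 2 := fun i _ => by ring
  have h0 : 0 ≤ ∑ i, (r i - α * v i) ^ 2 := Finset.sum_nonneg fun i _ => sq_nonneg _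
  rw [Finset.sum_congr rfl expand, Finset.sum_add_distrib, Finset.sum_sub_distrib,
    ← Finset.mul_sum, ← Finset.mul_sum, ← hα, hv] at h0
  nlinarith [h0]

lemma bessel_two (v w r : Fin n → ℝ) (hv : ∑ i, v i ^ 2 = 1)
    (hw : ∑ i, w i ^ 2 = 1) (hvw : ∑ i, v i * w i = 0) :
    (∑ i, r i * v i) ^ 2 + (∑ i, r i * w i) ^ 2 ≤ ∑ i, r i ^ 2 := by
  set α : ℝ := ∑ i, r i * v i with hα
  set β : ℝ := ∑ i, r i * w i with hβ
  have expand : ∀ i ∈ Finset.univ, (r i - α * v i - β * w i) ^ 2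
      = r i ^ 2 - (2 * α) * (r i * v i) - (2 * β) * (r i * w i)
        + α ^ 2 * v i ^ 2 + β ^ 2 * w i ^ 2 + (2 * α * β) * (v i * w i) := fun i _ => by ring
  have h0 : 0 ≤ ∑ i, (r i - α * v i - β * w i) ^ 2 := Finset.sum_nonneg fun i _ => sq_nonneg _
  rw [Finset.sum_congr rfl expand, Finset.sum_add_distrib, Finset.sum_add_distrib,
    Finset.sum_add_distrib, Finset.sum_sub_distrib, Finset.sum_sub_distrib,
    ← Finset.mul_sum, ← Finset.mul_sum, ← Finset.mul_sum, ← Finset.mul_sum, ← Finset.mul_sum,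
    ← hα, ← hβ, hv, hw, hvw] at h0
  nlinarith [h0]

lemma master (E : Matrix (Fin n) (Fin n) ℝ) (u v : Fin n → ℝ)
    (hu : ∑ i, u i ^ 2 = 1) (hv : ∑ j, v j ^ 2 = 1) :
    (∑ i, (∑ j, E i j * v j) ^ 2) + (∑ j, (∑ i, E i j * u i) ^ 2)
      - (∑ i, u i * ∑ j, E i j * v j) ^ 2 ≤ ∑ i, ∑ j, E i j ^ 2 := by
  set c : Fin n → ℝ := fun i => ∑ j, E i j * v j with hc
  set d : Fin n → ℝ := fun j => ∑ i, E i j * u i with hd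
  set α : ℝ := ∑ i, u i * c i with hα
  have hdv : ∑ j, d j * v j = α := by
    rw [hα]
    simp only [hc, hd, Finset.sum_mul, Finset.mul_sum]
    rw [Finset.sum_comm]
    exact Finset.sum_congr rfl fun i _ => Finset.sum_congr rfl fun j _ => by ring
  have hWu : ∀ j, ∑ i, (E i j - c i * v j) * u i = d j - α * v j := by
    intro j
    have e1 : ∀ i ∈ Finset.univ, (E i j - c i * v j) * u i
        = E i j * u i - v j * (u i * c i) := fun i _ => by ring
    rw [Finset.sum_congr rfl e1, Finset.sum_sub_distrib, ← Finset.mul_sum, ← hα]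
    simp only [hd]
    ring
  have hCS : ∀ j, (d j - α * v j) ^ 2 ≤ ∑ i, (E i j - c i * v j) ^ 2 := by
    intro j
    rw [← hWu j]
    exact bessel_one u (fun i => E i j - c i * v j) hu
  have hL : ∑ j, (d j - α * v j) ^ 2 = (∑ j, d j ^ 2) - α ^ 2 := by
    have expand : ∀ j ∈ Finset.univ, (d j - α * v j) ^ 2
        = d j ^ 2 - (2 * α) * (d j * v j) + α ^ 2 * v j ^ 2 := fun j _ => by ring
    rw [Finset.sum_congr rfl expand, Finset.sum_add_distrib, Finset.sum_sub_distrib,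
      ← Finset.mul_sum, ← Finset.mul_sum, hdv, hv]
    ring
  have hR : ∑ j, ∑ i, (E i j - c i * v j) ^ 2 = (∑ i, ∑ j, E i j ^ 2) - ∑ i, c i ^ 2 := by
    rw [Finset.sum_comm]
    have inner : ∀ i ∈ Finset.univ, ∑ j, (E i j - c i * v j) ^ 2
        = (∑ j, E i j ^ 2) - c i ^ 2 := by
      intro i _
      have expand : ∀ j ∈ Finset.univ, (E i j - c i * v j) ^ 2
          = E i j ^ 2 - (2 * c i) * (E i j * v j) + c i ^ 2 * v j ^ 2 := fun j _ => by ring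
      rw [Finset.sum_congr rfl expand, Finset.sum_add_distrib, Finset.sum_sub_distrib,
        ← Finset.mul_sum, ← Finset.mul_sum, hv]
      simp only [hc]
      ring
    rw [Finset.sum_congr rfl inner, Finset.sum_sub_distrib]
  have main : (∑ j, d j ^ 2) - α ^ 2 ≤ (∑ i, ∑ j, E i j ^ 2) - ∑ i, c i ^ 2 := by
    rw [← hL, ← hR]
    exact Finset.sum_le_sum fun j _ => hCS j
  linarith [main]

lemma sum_sq_one {x : Fin n → ℝ} (h : l2norm x = 1) : ∑ i, x i ^ 2 = 1 := by
  have h0 : 0 ≤ ∑ i, x i ^ 2 := Finset.sum_nonneg fun i _ => sq_nonneg _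
  unfold l2norm at h
  nlinarith [Real.sq_sqrt h0, h]

lemma ns_comb (p q : Fin n → ℝ) (hp : ∑ i, p i ^ 2 = 1) (hq : ∑ i, q i ^ 2 = 1) (β γ : ℝ) :
    ∑ i, (β * p i - γ * q i) ^ 2 = β ^ 2 - 2 * β * γ * (∑ i, p i * q i) + γ ^ 2 := by
  have expand : ∀ i ∈ Finset.univ, (β * p i - γ * q i) ^ 2
      = β ^ 2 * p i ^ 2 - (2 * β * γ) * (p i * q i) + γ ^ 2 * q i ^ 2 := fun i _ => by ring
  rw [Finset.sum_congr rfl expand, Finset.sum_add_distrib, Finset.sum_sub_distrib,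
    ← Finset.mul_sum, ← Finset.mul_sum, ← Finset.mul_sum, hp, hq]
  ring

end helpers

section scalar
variable {σ₀ σ ζ a b : ℝ}

lemma helperD (hζ0 : 0 ≤ ζ) (hζσ : ζ ≤ σ) : 0 ≤ (σ₀ - σ) ^ 2 + σ ^ 2 - ζ ^ 2 := by
  nlinarith [sq_nonneg (σ₀ - σ)]

lemma helperDlt (hζ0 : 0 ≤ ζ) (hzs : ζ < σ) : (σ₀ - σ) ^ 2 < (σ₀ - σ) ^ 2 + σ ^ 2 - ζ ^ 2 := by
  nlinarith

lemma helperXpos (hσ₀ : 0 < σ₀) (hζ0 : 0 ≤ ζ) (hzs : ζ < σ)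
    (I2 : (σ₀ * b) ^ 2 - 2 * (σ₀ * b) * σ * a + σ ^ 2 ≤ ζ ^ 2) : 0 < a * b := by
  have hσpos : 0 < σ := lt_of_le_of_lt hζ0 hzs
  by_contra hx
  push_neg at hx
  have t1 : 0 ≤ σ₀ * σ * (-(a * b)) :=
    mul_nonneg (mul_nonneg hσ₀.le hσpos.le) (neg_nonneg.mpr hx)
  nlinarith [I2, t1, sq_nonneg (σ₀ * b)]

lemma helperProd
    (I4 : ((σ₀ * b) ^ 2 - 2 * (σ₀ * b) * σ * a + σ ^ 2)
      + ((σ₀ * a) ^ 2 - 2 * (σ₀ * a) * σ * b + σ ^ 2)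
      - (σ₀ * b * a - σ) ^ 2 ≤ ζ ^ 2) :
    (σ₀ - σ) ^ 2 + σ ^ 2 - ζ ^ 2 ≤ (a * b * σ₀ - (σ₀ - σ)) ^ 2 := by
  nlinarith [I4, sq_nonneg (σ₀ * a - σ₀ * b)]

lemma helperX0 (hσ₀ : 0 < σ₀) (hσpos : 0 < σ) (hz2 : ζ ^ 2 = σ ^ 2)
    (I2 : (σ₀ * b) ^ 2 - 2 * (σ₀ * b) * σ * a + σ ^ 2 ≤ ζ ^ 2) : 0 ≤ a * b := by
  by_contra hx
  push_neg at hx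
  have t1 : 0 < σ₀ * σ * (-(a * b)) := mul_pos (mul_pos hσ₀ hσpos) (neg_pos.mpr hx)
  nlinarith [I2, t1, sq_nonneg (σ₀ * b)]

lemma helperXle (hσ₀ : 0 < σ₀) (hz2 : ζ ^ 2 = σ ^ 2)
    (hlt : a * b * σ₀ < σ₀ - σ + (σ₀ - σ))
    (I4 : ((σ₀ * b) ^ 2 - 2 * (σ₀ * b) * σ * a + σ ^ 2)
      + ((σ₀ * a) ^ 2 - 2 * (σ₀ * a) * σ * b + σ ^ 2)
      - (σ₀ * b * a - σ) ^ 2 ≤ ζ ^ 2) : a * b ≤ 0 := by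
  by_contra hxp
  push_neg at hxp
  have h1 : 0 < a * b * σ₀ := mul_pos hxp hσ₀
  have h2 : 0 < (σ₀ - σ + (σ₀ - σ)) - a * b * σ₀ := by linarith
  nlinarith [I4, sq_nonneg (σ₀ * a - σ₀ * b), mul_pos h1 h2]

lemma helperBzero (hσ₀ : 0 < σ₀) (hσ : 0 ≤ σ) (hXle : a * b ≤ 0) (hz2 : ζ ^ 2 = σ ^ 2)
    (I2 : (σ₀ * b) ^ 2 - 2 * (σ₀ * b) * σ * a + σ ^ 2 ≤ ζ ^ 2) : b = 0 := by
  have t1 : 0 ≤ σ₀ * σ * (-(a * b)) :=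
    mul_nonneg (mul_nonneg hσ₀.le hσ) (neg_nonneg.mpr hXle)
  have h2 : σ₀ ^ 2 * b ^ 2 ≤ 0 := by nlinarith [I2, t1]
  have hb2 : b ^ 2 = 0 := by nlinarith [sq_nonneg b, mul_pos hσ₀ hσ₀]
  exact pow_eq_zero_iff two_ne_zero |>.mp hb2

end scalar

set_option maxHeartbeats 1000000 in
/-- if H = σ₀ u₀ v₀ᵀ with unit vectors u₀, v₀ and σ₀ > 0, Ĥ has singular
triple (σ, u, v) with σ the largest singular value of Ĥ, and ‖H − Ĥ‖_F ≤ ζ ≤ σ, then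
⟨u₀, u⟩ ⟨v₀, v⟩ ≥ η(σ, σ₀, ζ). -/
theorem stmt0 {n : ℕ} (hn : 1 ≤ n) {σ₀ : ℝ} (hσ₀ : 0 < σ₀)
    {u₀ v₀ : Fin n → ℝ} (hu₀ : l2norm u₀ = 1) (hv₀ : l2norm v₀ = 1)
    {Hhat : Matrix (Fin n) (Fin n) ℝ} {σ : ℝ} {u v : Fin n → ℝ}
    (hst : SingularTriple Hhat σ u v)
    (hmax : ∀ (σ' : ℝ) (u' v' : Fin n → ℝ), SingularTriple Hhat σ' u' v' → σ' ≤ σ)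
    {ζ : ℝ} (hζ : frob (outerH σ₀ u₀ v₀ - Hhat) ≤ ζ) (hζσ : ζ ≤ σ) :
    eta σ σ₀ ζ ≤ inprod u₀ u * inprod v₀ v := by
  obtain ⟨hσ, hu1, hv1, hHv, hHu⟩ := hst
  have hu2 : ∑ i, u i ^ 2 = 1 := sum_sq_one hu1
  have hv2 : ∑ i, v i ^ 2 = 1 := sum_sq_one hv1
  have hu02 : ∑ i, u₀ i ^ 2 = 1 := sum_sq_one hu₀
  have hv02 : ∑ i, v₀ i ^ 2 = 1 := sum_sq_one hv₀
  set a : ℝ := inprod u₀ u with ha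
  set b : ℝ := inprod v₀ v with hb
  set E : Matrix (Fin n) (Fin n) ℝ := outerH σ₀ u₀ v₀ - Hhat with hE
  have haU : ∑ i, u₀ i * u i = a := rfl
  have hbU : ∑ j, v₀ j * v j = b := rfl
  -- column/row values of E against v and u
  have hcv : ∀ i, ∑ j, E i j * v j = σ₀ * b * u₀ i - σ * u i := by
    intro i
    have h1 : ∑ j, Hhat i j * v j = σ * u i := by
      have := congrFun hHv i
      simpa [Matrix.mulVec, dotProduct] using this
    have e1 : ∀ j ∈ Finset.univ, E i j * v j
        = (σ₀ * u₀ i) * (v₀ j * v j) - Hhat i j * v j := by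
      intro j _
      simp only [hE, Matrix.sub_apply, outerH, Matrix.of_apply]
      ring
    rw [Finset.sum_congr rfl e1, Finset.sum_sub_distrib, ← Finset.mul_sum, hbU, h1]
    ring
  have hdu : ∀ j, ∑ i, E i j * u i = σ₀ * a * v₀ j - σ * v j := by
    intro j
    have h1 : ∑ i, Hhat i j * u i = σ * v j := by
      have := congrFun hHu j
      simpa [Matrix.mulVec, dotProduct, Matrix.transpose_apply] using this
    have e1 : ∀ i ∈ Finset.univ, E i j * u i
        = (σ₀ * v₀ j) * (u₀ i * u i) - Hhat i j * u i := by
      intro i _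
      simp only [hE, Matrix.sub_apply, outerH, Matrix.of_apply]
      ring
    rw [Finset.sum_congr rfl e1, Finset.sum_sub_distrib, ← Finset.mul_sum, haU, h1]
    ring
  -- Frobenius facts
  set S : ℝ := ∑ i, ∑ j, E i j ^ 2 with hSdef
  have hS0 : 0 ≤ S := Finset.sum_nonneg fun i _ => Finset.sum_nonneg fun j _ => sq_nonneg _
  have hζ0 : 0 ≤ ζ := le_trans (Real.sqrt_nonneg _) hζ
  have hSζ : S ≤ ζ ^ 2 := by
    unfold frob at hζ
    nlinarith only [Real.sq_sqrt hS0, hζ, Real.sqrt_nonneg S, hζ0]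
  -- norms of E v and Eᵀ u and the cross term
  have nsc : ∑ i, (∑ j, E i j * v j) ^ 2
      = (σ₀ * b) ^ 2 - 2 * (σ₀ * b) * σ * a + σ ^ 2 := by
    have e1 : ∀ i ∈ Finset.univ, (∑ j, E i j * v j) ^ 2
        = (σ₀ * b * u₀ i - σ * u i) ^ 2 := fun i _ => by rw [hcv i]
    rw [Finset.sum_congr rfl e1, ns_comb u₀ u hu02 hu2 (σ₀ * b) σ, haU]
  have nsd : ∑ j, (∑ i, E i j * u i) ^ 2
      = (σ₀ * a) ^ 2 - 2 * (σ₀ * a) * σ * b + σ ^ 2 := by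
    have e1 : ∀ j ∈ Finset.univ, (∑ i, E i j * u i) ^ 2
        = (σ₀ * a * v₀ j - σ * v j) ^ 2 := fun j _ => by rw [hdu j]
    rw [Finset.sum_congr rfl e1, ns_comb v₀ v hv02 hv2 (σ₀ * a) σ, hbU]
  have hαval : ∑ i, u i * (∑ j, E i j * v j) = σ₀ * b * a - σ := by
    have e1 : ∀ i ∈ Finset.univ, u i * (∑ j, E i j * v j)
        = (σ₀ * b) * (u₀ i * u i) - σ * u i ^ 2 := fun i _ => by rw [hcv i]; ring
    rw [Finset.sum_congr rfl e1, Finset.sum_sub_distrib, ← Finset.mul_sum, ← Finset.mul_sum,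
      haU, hu2]
    ring
  -- key inequalities
  have I2 : (σ₀ * b) ^ 2 - 2 * (σ₀ * b) * σ * a + σ ^ 2 ≤ ζ ^ 2 := by
    have h : ∑ i, (∑ j, E i j * v j) ^ 2 ≤ S := by
      rw [hSdef]
      exact Finset.sum_le_sum fun i _ => bessel_one v (fun j => E i j) hv2
    rw [nsc] at h
    linarith only [h, hSζ]
  have I3 : (σ₀ * a) ^ 2 - 2 * (σ₀ * a) * σ * b + σ ^ 2 ≤ ζ ^ 2 := by
    have h : ∑ j, (∑ i, E i j * u i) ^ 2 ≤ S := by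
      rw [hSdef, Finset.sum_comm]
      exact Finset.sum_le_sum fun j _ => bessel_one u (fun i => E i j) hu2
    rw [nsd] at h
    linarith only [h, hSζ]
  have I3' : (σ₀ * a) ^ 2 - 2 * (σ₀ * a) * σ * b + σ ^ 2
      = (σ₀ * a) ^ 2 - 2 * (σ₀ * a) * σ * b + σ ^ 2 := rfl
  have I4 : ((σ₀ * b) ^ 2 - 2 * (σ₀ * b) * σ * a + σ ^ 2)
      + ((σ₀ * a) ^ 2 - 2 * (σ₀ * a) * σ * b + σ ^ 2)
      - (σ₀ * b * a - σ) ^ 2 ≤ ζ ^ 2 := by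
    have h := master E u v hu2 hv2
    rw [nsc, nsd, hαval] at h
    linarith only [h, hSζ]
  -- rewrite the goal
  have hD0 : 0 ≤ (σ₀ - σ) ^ 2 + σ ^ 2 - ζ ^ 2 := helperD hζ0 hζσ
  have hsqrtarg : (1 - σ / σ₀) ^ 2 + (σ / σ₀) ^ 2 - (ζ / σ₀) ^ 2
      = ((σ₀ - σ) ^ 2 + σ ^ 2 - ζ ^ 2) / σ₀ ^ 2 := by
    field_simp
  have hsq : Real.sqrt (((σ₀ - σ) ^ 2 + σ ^ 2 - ζ ^ 2) / σ₀ ^ 2)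
      = Real.sqrt ((σ₀ - σ) ^ 2 + σ ^ 2 - ζ ^ 2) / σ₀ := by
    rw [show ((σ₀ - σ) ^ 2 + σ ^ 2 - ζ ^ 2) / σ₀ ^ 2
        = (Real.sqrt ((σ₀ - σ) ^ 2 + σ ^ 2 - ζ ^ 2) / σ₀) ^ 2 by
      rw [div_pow, Real.sq_sqrt hD0]]
    exact Real.sqrt_sq (by positivity)
  have hetaeq : eta σ σ₀ ζ
      = ((σ₀ - σ) + Real.sqrt ((σ₀ - σ) ^ 2 + σ ^ 2 - ζ ^ 2)) / σ₀ := by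
    unfold eta
    rw [hsqrtarg, hsq]
    field_simp
  rw [hetaeq, div_le_iff₀ hσ₀]
  -- goal: σ₀ - σ + √D ≤ a * b * σ₀
  rcases lt_or_eq_of_le hζσ with hzs | hzs
  · -- ζ < σ
    have hXpos : 0 < a * b := helperXpos hσ₀ hζ0 hzs I2
    have hprod : (σ₀ - σ) ^ 2 + σ ^ 2 - ζ ^ 2 ≤ (a * b * σ₀ - (σ₀ - σ)) ^ 2 := helperProd I4
    have habs : Real.sqrt ((σ₀ - σ) ^ 2 + σ ^ 2 - ζ ^ 2) ≤ |a * b * σ₀ - (σ₀ - σ)| := by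
      rw [← Real.sqrt_sq_eq_abs]
      exact Real.sqrt_le_sqrt hprod
    have hclt : |σ₀ - σ| < Real.sqrt ((σ₀ - σ) ^ 2 + σ ^ 2 - ζ ^ 2) := by
      rw [← Real.sqrt_sq_eq_abs]
      exact Real.sqrt_lt_sqrt (sq_nonneg _) (helperDlt hζ0 hzs)
    have h1 : 0 < a * b * σ₀ := mul_pos hXpos hσ₀
    have h2 : σ₀ - σ ≤ |σ₀ - σ| := le_abs_self _
    rcases abs_cases (a * b * σ₀ - (σ₀ - σ)) with ⟨heq, _⟩ | ⟨heq, hneg⟩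
    · rw [heq] at habs
      linarith only [habs]
    · exfalso
      rw [heq] at habs
      linarith only [habs, h1, h2, hclt]
  · -- ζ = σ
    have hz2 : ζ ^ 2 = σ ^ 2 := by rw [hzs]
    have hsqD : Real.sqrt ((σ₀ - σ) ^ 2 + σ ^ 2 - ζ ^ 2) = |σ₀ - σ| := by
      rw [show (σ₀ - σ) ^ 2 + σ ^ 2 - ζ ^ 2 = (σ₀ - σ) ^ 2 by rw [hz2]; ring,
        Real.sqrt_sq_eq_abs]
    rcases le_or_gt σ₀ σ with hc | hc
    · have hσpos : 0 < σ := lt_of_lt_of_le hσ₀ hc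
      have hX0 : 0 ≤ a * b := helperX0 hσ₀ hσpos hz2 I2
      rw [hsqD, abs_of_nonpos (by linarith only [hc])]
      have := mul_nonneg hX0 hσ₀.le
      linarith only [this]
    · rw [hsqD, abs_of_pos (by linarith only [hc])]
      by_contra hlt
      push_neg at hlt
      have hXle : a * b ≤ 0 := helperXle hσ₀ hz2 hlt I4
      have hb0 : b = 0 := helperBzero hσ₀ hσ hXle hz2 I2
      have ha0 : a = 0 := by
        refine helperBzero hσ₀ hσ (by linarith only [hXle, mul_comm a b] : b * a ≤ 0) hz2 ?_
        linarith only [I3]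
      -- now E v₀ = 0 and Eᵀ u₀ = 0
      have hvv₀ : ∑ j, v j * v₀ j = 0 := by
        have h : ∑ j, v₀ j * v j = 0 := by rw [hbU, hb0]
        rw [← h]
        exact Finset.sum_congr rfl fun j _ => mul_comm _ _
      have huu₀ : ∑ i, u i * u₀ i = 0 := by
        have h : ∑ i, u₀ i * u i = 0 := by rw [haU, ha0]
        rw [← h]
        exact Finset.sum_congr rfl fun i _ => mul_comm _ _
      have key1 : (∑ i, (∑ j, E i j * v j) ^ 2) + (∑ i, (∑ j, E i j * v₀ j) ^ 2) ≤ S := by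
        rw [hSdef, ← Finset.sum_add_distrib]
        exact Finset.sum_le_sum fun i _ => bessel_two v v₀ (fun j => E i j) hv2 hv02 hvv₀
      have key2 : (∑ j, (∑ i, E i j * u i) ^ 2) + (∑ j, (∑ i, E i j * u₀ i) ^ 2) ≤ S := by
        rw [hSdef, Finset.sum_comm, ← Finset.sum_add_distrib]
        exact Finset.sum_le_sum fun j _ => bessel_two u u₀ (fun i => E i j) hu2 hu02 huu₀
      have nsc0 : (σ₀ * b) ^ 2 - 2 * (σ₀ * b) * σ * a + σ ^ 2 = σ ^ 2 := by
        rw [ha0, hb0]; ring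
      have nsd0 : (σ₀ * a) ^ 2 - 2 * (σ₀ * a) * σ * b + σ ^ 2 = σ ^ 2 := by
        rw [ha0, hb0]; ring
      have hEv₀ : ∀ i, ∑ j, E i j * v₀ j = 0 := by
        have hle : ∑ i, (∑ j, E i j * v₀ j) ^ 2 ≤ 0 := by
          rw [nsc, nsc0] at key1
          linarith only [key1, hSζ, hz2]
        have hzz : ∑ i, (∑ j, E i j * v₀ j) ^ 2 = 0 :=
          le_antisymm hle (Finset.sum_nonneg fun i _ => sq_nonneg _)
        intro i
        have := (Finset.sum_eq_zero_iff_of_nonneg fun i _ => sq_nonneg _).mp hzz i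
          (Finset.mem_univ i)
        exact pow_eq_zero_iff two_ne_zero |>.mp this
      have hEu₀ : ∀ j, ∑ i, E i j * u₀ i = 0 := by
        have hle : ∑ j, (∑ i, E i j * u₀ i) ^ 2 ≤ 0 := by
          rw [nsd, nsd0] at key2
          linarith only [key2, hSζ, hz2]
        have hzz : ∑ j, (∑ i, E i j * u₀ i) ^ 2 = 0 :=
          le_antisymm hle (Finset.sum_nonneg fun j _ => sq_nonneg _)
        intro j
        have := (Finset.sum_eq_zero_iff_of_nonneg fun j _ => sq_nonneg _).mp hzz j
          (Finset.mem_univ j)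
        exact pow_eq_zero_iff two_ne_zero |>.mp this
      have hHv₀ : Hhat.mulVec v₀ = σ₀ • u₀ := by
        funext i
        have h := hEv₀ i
        have e1 : ∀ j ∈ Finset.univ, E i j * v₀ j
            = (σ₀ * u₀ i) * (v₀ j ^ 2) - Hhat i j * v₀ j := by
          intro j _
          simp only [hE, Matrix.sub_apply, outerH, Matrix.of_apply]
          ring
        rw [Finset.sum_congr rfl e1, Finset.sum_sub_distrib, ← Finset.mul_sum, hv02] at h
        have h2 : (Hhat.mulVec v₀) i = ∑ j, Hhat i j * v₀ j := by
          simp [Matrix.mulVec, dotProduct]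
        simp only [Pi.smul_apply, smul_eq_mul]
        rw [h2]
        linarith only [h]
      have hHu₀ : Hhat.transpose.mulVec u₀ = σ₀ • v₀ := by
        funext j
        have h := hEu₀ j
        have e1 : ∀ i ∈ Finset.univ, E i j * u₀ i
            = (σ₀ * v₀ j) * (u₀ i ^ 2) - Hhat i j * u₀ i := by
          intro i _
          simp only [hE, Matrix.sub_apply, outerH, Matrix.of_apply]
          ring
        rw [Finset.sum_congr rfl e1, Finset.sum_sub_distrib, ← Finset.mul_sum, hu02] at h
        have h2 : (Hhat.transpose.mulVec u₀) j = ∑ i, Hhat i j * u₀ i := by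
          simp [Matrix.mulVec, dotProduct, Matrix.transpose_apply]
        simp only [Pi.smul_apply, smul_eq_mul]
        rw [h2]
        linarith only [h]
      have htriple : SingularTriple Hhat σ₀ u₀ v₀ := ⟨hσ₀.le, hu₀, hv₀, hHv₀, hHu₀⟩
      have hfin := hmax σ₀ u₀ v₀ htriple
      linarith only [hfin, hc, hlt]
end

section
/- For all real numbers ζ, σ, σ₀ with 0 ≤ ζ ≤ σ ≤ σ₀ and σ > 0, one has η(σ, σ₀, ζ) ≥ √(1 − ζ²/σ²). -/
lemma Real.sqrt_le_one_sub_add_sqrt {s u : ℝ} (hs0 : 0 ≤ s) (hs1 : s ≤ 1) (hu : u ≤ 1) :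
    √u ≤ (1 - s) + √((1 - s) ^ 2 + s ^ 2 * u) := by
  have hu_le_one : √u ≤ 1 := Real.sqrt_le_one.mpr hu
  calc √u = (1 - s) * √u + s * √u := by ring
    _ ≤ (1 - s) * 1 + √(s ^ 2 * u) := by
        rw [Real.sqrt_mul (sq_nonneg s), Real.sqrt_sq hs0]
        gcongr
    _ ≤ (1 - s) + √((1 - s) ^ 2 + s ^ 2 * u) := by
        rw [mul_one]
        gcongr
        exact le_add_of_nonneg_left (sq_nonneg _)

lemma eta_eq {σ σ₀ ζ : ℝ} (hσ : σ ≠ 0) :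
    eta σ σ₀ ζ = (1 - σ / σ₀) + √((1 - σ / σ₀) ^ 2 + (σ / σ₀) ^ 2 * (1 - ζ ^ 2 / σ ^ 2)) := by
  rw [eta]
  congr 2
  field_simp
  ring

theorem stmt1_general {ζ σ σ₀ : ℝ} (h2 : σ ≤ σ₀) (hσ : 0 < σ) :
    Real.sqrt (1 - ζ ^ 2 / σ ^ 2) ≤ eta σ σ₀ ζ := by
  have hσ₀ : 0 < σ₀ := hσ.trans_le h2
  rw [eta_eq hσ.ne']
  exact Real.sqrt_le_one_sub_add_sqrt (div_pos hσ hσ₀).le ((div_le_one hσ₀).mpr h2)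
    (sub_le_self _ (by positivity))

/-- for 0 ≤ ζ ≤ σ ≤ σ₀ with σ > 0, η(σ, σ₀, ζ) ≥ √(1 − ζ²/σ²). -/
theorem stmt1 {ζ σ σ₀ : ℝ} (h0 : 0 ≤ ζ) (h1 : ζ ≤ σ) (h2 : σ ≤ σ₀) (hσ : 0 < σ) :
    Real.sqrt (1 - ζ ^ 2 / σ ^ 2) ≤ eta σ σ₀ ζ :=
  stmt1_general h2 hσ
end

section
/- Let n ≥ 1, l* ∈ {1,…,n}, and let v ∈ ℝ^n be entrywise nonnegative. For every z ∈ ℝ^n that is unimodal with peak at l* and satisfies ‖z‖₂ = 1, there exists z' ∈ ℝ^n with z' ≥ 0 entrywise, z' unimodal with peak at l*, ‖z'‖₂ = 1, and ⟨z', v⟩ ≥ ⟨z, v⟩. -/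
open scoped BigOperators

/-- `z` is unimodal with peak at (0-based) index `l`: entries are non-increasing from `l`
rightwards and non-decreasing up to `l`. -/
def Unimodal {n : ℕ} (z : Fin n → ℝ) (l : Fin n) : Prop :=
  (∀ j : ℕ, ∀ h : j + 1 < n, (l : ℕ) ≤ j → z ⟨j + 1, h⟩ ≤ z ⟨j, Nat.lt_of_succ_lt h⟩) ∧
  (∀ j : ℕ, ∀ h : j + 1 < n, j + 1 ≤ (l : ℕ) → z ⟨j, Nat.lt_of_succ_lt h⟩ ≤ z ⟨j + 1, h⟩)

/-- for nonnegative v and any unit-norm z unimodal with peak at l*, there is a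
nonnegative unit-norm z' unimodal with peak at l* with ⟨z', v⟩ ≥ ⟨z, v⟩. -/
theorem stmt5 {n : ℕ} (hn : 1 ≤ n) (lstar : Fin n)
    {v : Fin n → ℝ} (hv : ∀ i, 0 ≤ v i)
    (z : Fin n → ℝ) (hz : Unimodal z lstar) (hznorm : l2norm z = 1) :
    ∃ z' : Fin n → ℝ, (∀ i, 0 ≤ z' i) ∧ Unimodal z' lstar ∧ l2norm z' = 1 ∧
      inprod z v ≤ inprod z' v := by
  set p : Fin n → ℝ := fun i => max (z i) 0 with hp
  have hp0 : ∀ i, 0 ≤ p i := fun i => le_max_right _ _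
  have hpz : ∀ i, z i ≤ p i := fun i => le_max_left _ _
  have hpsq : ∀ i, p i ^ 2 ≤ z i ^ 2 := by
    intro i
    rcases le_or_gt (z i) 0 with h | h
    · simp [hp, max_eq_right h]; positivity
    · simp [hp, max_eq_left h.le]
  have hsum_le : ∑ i, p i ^ 2 ≤ ∑ i, z i ^ 2 := Finset.sum_le_sum fun i _ => hpsq i
  have hzsum : ∑ i, z i ^ 2 = 1 := by
    have h0 : (0:ℝ) ≤ ∑ i, z i ^ 2 := Finset.sum_nonneg fun i _ => sq_nonneg _
    have := hznorm
    rw [l2norm] at this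
    nlinarith [Real.sq_sqrt h0, this]
  by_cases hzero : ∀ i, p i = 0
  · -- all z i ≤ 0; take indicator at lstar
    refine ⟨fun i => if i = lstar then 1 else 0, ?_, ?_, ?_, ?_⟩
    · intro i; dsimp only; split <;> norm_num
    · constructor
      · intro j h hj
        dsimp only
        have h1 : ¬ (⟨j + 1, h⟩ : Fin n) = lstar := by
          intro he
          have : (lstar : ℕ) = j + 1 := by rw [← he]
          omega
        rw [if_neg h1]
        split <;> norm_num
      · intro j h hj
        dsimp only
        have h1 : ¬ (⟨j, Nat.lt_of_succ_lt h⟩ : Fin n) = lstar := by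
          intro he
          have : (lstar : ℕ) = j := by rw [← he]
          omega
        rw [if_neg h1]
        split <;> norm_num
    · rw [l2norm]
      have : (∑ i, (if i = lstar then (1:ℝ) else 0) ^ 2) = 1 := by
        simp [apply_ite (fun x : ℝ => x ^ 2)]
      rw [this, Real.sqrt_one]
    · rw [inprod, inprod]
      have h1 : ∑ i, z i * v i ≤ 0 := by
        apply Finset.sum_nonpos
        intro i _
        have hz0 : z i ≤ 0 := sup_eq_right.mp (hzero i)
        exact mul_nonpos_of_nonpos_of_nonneg hz0 (hv i)
      have h2 : (0:ℝ) ≤ ∑ i, (if i = lstar then (1:ℝ) else 0) * v i := by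
        apply Finset.sum_nonneg
        intro i _
        split <;> simp [hv i]
      linarith
  · push_neg at hzero
    obtain ⟨i0, hi0⟩ := hzero
    have hi0' : 0 < p i0 := lt_of_le_of_ne (hp0 i0) (Ne.symm hi0)
    have hssum_pos : 0 < ∑ i, p i ^ 2 :=
      Finset.sum_pos' (fun i _ => sq_nonneg _) ⟨i0, Finset.mem_univ i0, by positivity⟩
    set s : ℝ := Real.sqrt (∑ i, p i ^ 2) with hs
    have hspos : 0 < s := Real.sqrt_pos.mpr hssum_pos
    have hs1 : s ≤ 1 := by
      rw [hs]
      calc Real.sqrt (∑ i, p i ^ 2) ≤ Real.sqrt (∑ i, z i ^ 2) :=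
            Real.sqrt_le_sqrt hsum_le
        _ = 1 := by rw [hzsum, Real.sqrt_one]
    have hssq : s ^ 2 = ∑ i, p i ^ 2 := Real.sq_sqrt hssum_pos.le
    refine ⟨fun i => s⁻¹ * p i, ?_, ?_, ?_, ?_⟩
    · intro i; positivity
    · constructor
      · intro j h hj
        exact mul_le_mul_of_nonneg_left
          (max_le_max (hz.1 j h hj) le_rfl) (by positivity)
      · intro j h hj
        exact mul_le_mul_of_nonneg_left
          (max_le_max (hz.2 j h hj) le_rfl) (by positivity)
    · rw [l2norm]
      have h4 : (∑ i, (s⁻¹ * p i) ^ 2) = s⁻¹ ^ 2 * ∑ i, p i ^ 2 := by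
        rw [Finset.mul_sum]
        exact Finset.sum_congr rfl fun i _ => by ring
      have : (∑ i, (s⁻¹ * p i) ^ 2) = 1 := by
        rw [h4, ← hssq]
        field_simp
      rw [this, Real.sqrt_one]
    · rw [inprod, inprod]
      have h1 : ∑ i, z i * v i ≤ ∑ i, p i * v i :=
        Finset.sum_le_sum fun i _ => mul_le_mul_of_nonneg_right (hpz i) (hv i)
      have h2 : ∑ i, p i * v i ≤ ∑ i, s⁻¹ * p i * v i := by
        apply Finset.sum_le_sum
        intro i _
        have h3 : (1:ℝ) ≤ s⁻¹ := (one_le_inv₀ hspos).mpr hs1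
        nlinarith [mul_nonneg (hp0 i) (hv i)]
      linarith
end

section
/- Let n ≥ 1, l* ∈ {1,…,n}, ρ ∈ ℝ, and let v ∈ ℝ^n be entrywise nonnegative. Then the following are equivalent: (i) there exists z ∈ ℝ^n with z ≥ 0 entrywise, z unimodal with peak at l*, ‖z‖₂ = 1 and ⟨z, v⟩ ≥ ρ; (ii) there exists z ∈ ℝ^n (not necessarily nonnegative) with z unimodal with peak at l*, ‖z‖₂ = 1 and ⟨z, v⟩ ≥ ρ. In other words, the entrywise nonnegativity constraint is redundant in the feasibility problem. -/
open scoped BigOperators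

/-!
Replacing a feasible `z` by its positive part `z⁺` keeps it unimodal (a monotone map is applied
entrywise), does not decrease `⟨z, v⟩` since `v ≥ 0`, and does not increase its norm. If
`z⁺ ≠ 0`, rescaling it to unit norm multiplies the nonnegative number `⟨z⁺, v⟩` by a factor
`≥ 1`. If `z⁺ = 0`, then `⟨z, v⟩ ≤ 0 ≤ v l*`, and the unit vector at the peak is feasible.
-/

section

variable {n : ℕ}

theorem Unimodal.comp_monotone {z : Fin n → ℝ} {l : Fin n} (hz : Unimodal z l) {f : ℝ → ℝ}
    (hf : Monotone f) : Unimodal (f ∘ z) l :=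
  ⟨fun j h hj => hf (hz.1 j h hj), fun j h hj => hf (hz.2 j h hj)⟩

theorem unimodal_single (l : Fin n) {a : ℝ} (ha : 0 ≤ a) : Unimodal (Pi.single l a) l := by
  have hnonneg : 0 ≤ (Pi.single l a : Fin n → ℝ) := Pi.single_nonneg.2 ha
  constructor
  · intro j h hj
    rw [Pi.single_eq_of_ne (Fin.ne_of_val_ne (by dsimp only; omega))]
    exact hnonneg _
  · intro j h hj
    rw [Pi.single_eq_of_ne (Fin.ne_of_val_ne (by dsimp only; omega))]
    exact hnonneg _

theorem l2norm_nonneg (x : Fin n → ℝ) : 0 ≤ l2norm x := Real.sqrt_nonneg _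

theorem l2norm_smul (c : ℝ) (x : Fin n → ℝ) : l2norm (c • x) = |c| * l2norm x := by
  simp only [l2norm, Pi.smul_apply, smul_eq_mul, mul_pow, ← Finset.mul_sum]
  rw [Real.sqrt_mul (sq_nonneg c), Real.sqrt_sq_eq_abs]

theorem l2norm_eq_zero {x : Fin n → ℝ} : l2norm x = 0 ↔ x = 0 := by
  rw [l2norm, Real.sqrt_eq_zero (Finset.sum_nonneg fun i _ => sq_nonneg _),
    Finset.sum_eq_zero_iff_of_nonneg fun i _ => sq_nonneg _, funext_iff]
  simp

theorem l2norm_posPart_le (x : Fin n → ℝ) : l2norm x⁺ ≤ l2norm x := by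
  refine Real.sqrt_le_sqrt (Finset.sum_le_sum fun i _ => ?_)
  rw [Pi.posPart_apply, ← sq_abs (x i)]
  exact pow_le_pow_left₀ (posPart_nonneg _) (sup_le (le_abs_self _) (abs_nonneg _)) 2

theorem l2norm_single (l : Fin n) : l2norm (Pi.single l 1) = 1 := by
  simp [l2norm, apply_ite (· ^ 2 : ℝ → ℝ), Pi.single_apply]

theorem inprod_smul_left (c : ℝ) (x y : Fin n → ℝ) : inprod (c • x) y = c * inprod x y := by
  simp only [inprod, Pi.smul_apply, smul_eq_mul, Finset.mul_sum, mul_assoc]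

theorem inprod_single_left (l : Fin n) (a : ℝ) (y : Fin n → ℝ) :
    inprod (Pi.single l a) y = a * y l := by
  simp [inprod, Pi.single_apply]

theorem inprod_nonneg {x y : Fin n → ℝ} (hx : 0 ≤ x) (hy : 0 ≤ y) : 0 ≤ inprod x y :=
  Finset.sum_nonneg fun i _ => mul_nonneg (hx i) (hy i)

theorem inprod_le_inprod_left {x x' y : Fin n → ℝ} (hx : x ≤ x') (hy : 0 ≤ y) :
    inprod x y ≤ inprod x' y :=
  Finset.sum_le_sum fun i _ => mul_le_mul_of_nonneg_right (hx i) (hy i)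

end

theorem stmt6_general {n : ℕ} (lstar : Fin n) (ρ : ℝ)
    {v : Fin n → ℝ} (hv : ∀ i, 0 ≤ v i) :
    (∃ z : Fin n → ℝ, (∀ i, 0 ≤ z i) ∧ Unimodal z lstar ∧ l2norm z = 1 ∧ ρ ≤ inprod z v) ↔
      (∃ z : Fin n → ℝ, Unimodal z lstar ∧ l2norm z = 1 ∧ ρ ≤ inprod z v) := by
  refine ⟨fun ⟨z, _, hz⟩ => ⟨z, hz⟩, ?_⟩
  rintro ⟨z, hzu, hz1, hρ⟩
  have hρ' : ρ ≤ inprod z⁺ v := hρ.trans (inprod_le_inprod_left (le_posPart z) hv)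
  by_cases hz0 : z⁺ = 0
  · have hzv : inprod z⁺ v = 0 := by rw [hz0]; simp [inprod]
    have hsingle : 0 ≤ (Pi.single lstar 1 : Fin n → ℝ) := Pi.single_nonneg.2 zero_le_one
    refine ⟨Pi.single lstar 1, hsingle, unimodal_single lstar zero_le_one, l2norm_single lstar, ?_⟩
    rw [inprod_single_left, one_mul]
    linarith [hv lstar]
  · set c := l2norm z⁺
    have hc0 : 0 < c := (l2norm_nonneg _).lt_of_ne' (l2norm_eq_zero.not.2 hz0)
    have hc1 : c ≤ 1 := hz1 ▸ l2norm_posPart_le z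
    refine ⟨c⁻¹ • z⁺, fun i => mul_nonneg (inv_nonneg.2 hc0.le) (posPart_nonneg _),
      hzu.comp_monotone fun s t hst => mul_le_mul_of_nonneg_left (posPart_mono hst)
        (inv_nonneg.2 hc0.le), ?_, ?_⟩
    · rw [l2norm_smul, abs_of_pos (inv_pos.2 hc0), inv_mul_cancel₀ hc0.ne']
    · rw [inprod_smul_left, inv_mul_eq_div]
      exact hρ'.trans (le_div_self (inprod_nonneg (posPart_nonneg z) hv) hc0 hc1)

/-- for nonnegative v, feasibility of the unimodal problem with the entrywise
nonnegativity constraint is equivalent to feasibility without it. -/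
theorem stmt6 {n : ℕ} (hn : 1 ≤ n) (lstar : Fin n) (ρ : ℝ)
    {v : Fin n → ℝ} (hv : ∀ i, 0 ≤ v i) :
    (∃ z : Fin n → ℝ, (∀ i, 0 ≤ z i) ∧ Unimodal z lstar ∧ l2norm z = 1 ∧ ρ ≤ inprod z v) ↔
      (∃ z : Fin n → ℝ, Unimodal z lstar ∧ l2norm z = 1 ∧ ρ ≤ inprod z v) :=
  stmt6_general lstar ρ hv
end

section
/- Let v ∈ ℝ^n be entrywise nonnegative and unimodal with peak at an index l⁰ ∈ {2, 3, …, n}. Then the function j ↦ (Σ_{k=j+1}^{n} v(k)) / (l⁰ − j) is monotonically non-decreasing in j over the range 1 ≤ j ≤ l⁰ − 1. -/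
open scoped BigOperators

/-- `tailSum v j = Σ_{k=j+1}^{n} v(k)` in 1-based indexing, i.e. the sum of the entries of
`v` with 0-based index at least `j`. -/
noncomputable def tailSum {n : ℕ} (v : Fin n → ℝ) (j : ℕ) : ℝ :=
  ∑ i : Fin n, if j ≤ (i : ℕ) then v i else 0

noncomputable def gfun {n : ℕ} (v : Fin n → ℝ) (i : ℕ) : ℝ :=
  if h : i < n then v ⟨i, h⟩ else 0

lemma gfun_nonneg {n : ℕ} {v : Fin n → ℝ} (hv : ∀ i, 0 ≤ v i) (i : ℕ) :
    0 ≤ gfun v i := by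
  unfold gfun; split <;> [exact hv _; exact le_rfl]

lemma tailSum_eq {n : ℕ} (v : Fin n → ℝ) (j : ℕ) :
    tailSum v j = ∑ i ∈ Finset.Ico j n, gfun v i := by
  have h1 : tailSum v j = ∑ i ∈ Finset.range n,
      (if j ≤ i then gfun v i else 0) := by
    rw [tailSum, ← Fin.sum_univ_eq_sum_range]
    apply Finset.sum_congr rfl
    intro i _
    simp [gfun, i.isLt]
  rw [h1, ← Finset.sum_filter]
  congr 1
  ext i
  simp [Finset.mem_Ico, Finset.mem_range, and_comm]

lemma gfun_mono {n : ℕ} {v : Fin n → ℝ} {l0 : Fin n} (hvuni : Unimodal v l0) :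
    ∀ b a : ℕ, a ≤ b → b ≤ (l0 : ℕ) → gfun v a ≤ gfun v b := by
  intro b
  induction b with
  | zero => intro a ha _; interval_cases a; exact le_rfl
  | succ b ih =>
    intro a ha hb
    rcases Nat.lt_or_ge a (b+1) with h | h
    · have hbn : b + 1 < n := lt_of_le_of_lt hb l0.isLt
      have hstep : gfun v b ≤ gfun v (b+1) := by
        have := hvuni.2 b hbn hb
        simpa [gfun, hbn, Nat.lt_of_succ_lt hbn] using this
      exact le_trans (ih a (Nat.lt_succ_iff.mp h) (le_trans (Nat.le_succ b) hb)) hstep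
    · have : a = b + 1 := le_antisymm ha h
      subst this; exact le_rfl

lemma stmt7_step {n : ℕ} {v : Fin n → ℝ} (hv : ∀ i, 0 ≤ v i)
    {l0 : Fin n} (hvuni : Unimodal v l0) (j : ℕ) (hj : j + 1 ≤ (l0 : ℕ)) :
    tailSum v j / (((l0 : ℕ) + 1 - j : ℕ) : ℝ) ≤
      tailSum v (j+1) / (((l0 : ℕ) + 1 - (j+1) : ℕ) : ℝ) := by
  have hln : (l0 : ℕ) < n := l0.isLt
  have hjn : j < n := by omega
  set m : ℕ := (l0 : ℕ) - j with hm
  have hm1 : 1 ≤ m := by omega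
  have hd1 : ((l0 : ℕ) + 1 - j : ℕ) = m + 1 := by omega
  have hd2 : ((l0 : ℕ) + 1 - (j+1) : ℕ) = m := by omega
  have hrec : tailSum v j = gfun v j + tailSum v (j+1) := by
    rw [tailSum_eq, tailSum_eq, Finset.sum_eq_sum_Ico_succ_bot hjn]
  have hlb : (m : ℝ) * gfun v j ≤ tailSum v (j+1) := by
    rw [tailSum_eq]
    have hsub : Finset.Ico (j+1) ((l0:ℕ)+1) ⊆ Finset.Ico (j+1) n := by
      apply Finset.Ico_subset_Ico le_rfl; omega
    have h1 : ∑ i ∈ Finset.Ico (j+1) ((l0:ℕ)+1), gfun v i ≤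
        ∑ i ∈ Finset.Ico (j+1) n, gfun v i := by
      apply Finset.sum_le_sum_of_subset_of_nonneg hsub
      intro i _ _; exact gfun_nonneg hv i
    have h2 : (Finset.Ico (j+1) ((l0:ℕ)+1)).card • gfun v j ≤
        ∑ i ∈ Finset.Ico (j+1) ((l0:ℕ)+1), gfun v i := by
      apply Finset.card_nsmul_le_sum
      intro i hi
      rw [Finset.mem_Ico] at hi
      exact gfun_mono hvuni i j (by omega) (by omega)
    have hcard : (Finset.Ico (j+1) ((l0:ℕ)+1)).card = m := by
      rw [Nat.card_Ico]; omega
    rw [hcard] at h2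
    calc (m : ℝ) * gfun v j = m • gfun v j := by simp [nsmul_eq_mul]
      _ ≤ _ := le_trans h2 h1
  have hT'nn : 0 ≤ tailSum v (j+1) := by
    rw [tailSum_eq]
    exact Finset.sum_nonneg fun i _ => gfun_nonneg hv i
  have hgnn : 0 ≤ gfun v j := gfun_nonneg hv j
  rw [hrec, hd1, hd2]
  rw [div_le_div_iff₀ (by positivity) (by exact_mod_cast Nat.cast_pos.mpr hm1)]
  push_cast
  nlinarith [hlb, hgnn, hT'nn]

/-- for nonnegative v unimodal with peak at the (1-based) index l⁰ ≥ 2, the map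
j ↦ (Σ_{k=j+1}^{n} v(k)) / (l⁰ − j) is monotonically non-decreasing over 1 ≤ j ≤ l⁰ − 1.
Here `l0 : Fin n` is the 0-based peak, so the 1-based peak is l⁰ = l0 + 1 and the denominator
l⁰ − j equals l0 + 1 − j. -/
theorem stmt7 {n : ℕ} {v : Fin n → ℝ} (hv : ∀ i, 0 ≤ v i)
    {l0 : Fin n} (hl0 : 1 ≤ (l0 : ℕ)) (hvuni : Unimodal v l0) :
    ∀ j k : ℕ, 1 ≤ j → j ≤ k → k ≤ (l0 : ℕ) →
      tailSum v j / (((l0 : ℕ) + 1 - j : ℕ) : ℝ) ≤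
        tailSum v k / (((l0 : ℕ) + 1 - k : ℕ) : ℝ) := by
  intro j k h1 hjk hk
  induction k, hjk using Nat.le_induction with
  | base => exact le_rfl
  | succ k hk' ih =>
    exact le_trans (ih (by omega)) (stmt7_step hv hvuni k hk)
end

section
/- Let n ≥ 1, σ₀ > 0, and let u₀, v₀ ∈ ℝ^n be unit ℓ₂-norm vectors; set H = σ₀ u₀ v₀ᵀ. Let Ĥ ∈ ℝ^{n×n} admit a singular triple (σ, u, v), and set α := ⟨u₀, u⟩ and β := ⟨v₀, v⟩. If ‖H − Ĥ‖_F ≤ ζ, then ζ² ≥ (σ₀ α β − σ)² + σ₀² α² (1 − β²) + σ₀² β² (1 − α²). -/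
open scoped BigOperators

/-- with α = ⟨u₀, u⟩ and β = ⟨v₀, v⟩, if ‖H − Ĥ‖_F ≤ ζ then
ζ² ≥ (σ₀ α β − σ)² + σ₀² α² (1 − β²) + σ₀² β² (1 − α²). -/
theorem stmt10 {n : ℕ} (hn : 1 ≤ n) {σ₀ : ℝ} (hσ₀ : 0 < σ₀)
    {u₀ v₀ : Fin n → ℝ} (hu₀ : l2norm u₀ = 1) (hv₀ : l2norm v₀ = 1)
    {Hhat : Matrix (Fin n) (Fin n) ℝ} {σ : ℝ} {u v : Fin n → ℝ}
    (hst : SingularTriple Hhat σ u v)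
    {ζ : ℝ} (hζ : frob (outerH σ₀ u₀ v₀ - Hhat) ≤ ζ) :
    (σ₀ * inprod u₀ u * inprod v₀ v - σ) ^ 2
      + σ₀ ^ 2 * inprod u₀ u ^ 2 * (1 - inprod v₀ v ^ 2)
      + σ₀ ^ 2 * inprod v₀ v ^ 2 * (1 - inprod u₀ u ^ 2) ≤ ζ ^ 2 := by
  obtain ⟨hσ, hu1, hv1, hMv, hMtu⟩ := hst
  have hu2 : ∑ i, u i ^ 2 = 1 := Real.sqrt_eq_one.mp hu1
  have hv2 : ∑ i, v i ^ 2 = 1 := Real.sqrt_eq_one.mp hv1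
  have hu02 : ∑ i, u₀ i ^ 2 = 1 := Real.sqrt_eq_one.mp hu₀
  have hv02 : ∑ i, v₀ i ^ 2 = 1 := Real.sqrt_eq_one.mp hv₀
  set α : ℝ := inprod u₀ u with hαdef
  set β : ℝ := inprod v₀ v with hβdef
  have hα : ∑ i, u₀ i * u i = α := rfl
  have hβ : ∑ i, v₀ i * v i = β := rfl
  set E : Matrix (Fin n) (Fin n) ℝ := outerH σ₀ u₀ v₀ - Hhat with hEdef
  have hEij : ∀ i j, E i j = σ₀ * u₀ i * v₀ j - Hhat i j := by
    intro i j; simp [hEdef, outerH, Matrix.sub_apply]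
  have hHv : ∀ i, ∑ j, Hhat i j * v j = σ * u i := by
    intro i
    have := congrFun hMv i
    simpa [Matrix.mulVec, dotProduct] using this
  have hHu : ∀ j, ∑ i, Hhat i j * u i = σ * v j := by
    intro j
    have := congrFun hMtu j
    simpa [Matrix.mulVec, dotProduct, Matrix.transpose_apply, mul_comm] using this
  -- p = E v, q = Eᵀ u, a = uᵀ E v
  set p : Fin n → ℝ := fun i => σ₀ * β * u₀ i - σ * u i with hpdef
  set q : Fin n → ℝ := fun j => σ₀ * α * v₀ j - σ * v j with hqdef
  set a : ℝ := σ₀ * α * β - σ with hadef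
  have hp : ∀ i, ∑ j, E i j * v j = p i := by
    intro i
    have h1 : ∑ j, E i j * v j = σ₀ * u₀ i * (∑ j, v₀ j * v j) - ∑ j, Hhat i j * v j := by
      rw [Finset.mul_sum, ← Finset.sum_sub_distrib]
      exact Finset.sum_congr rfl fun j _ => by rw [hEij]; ring
    rw [h1, hHv, hβ, hpdef]; ring
  have hq : ∀ j, ∑ i, E i j * u i = q j := by
    intro j
    have h1 : ∑ i, E i j * u i = σ₀ * v₀ j * (∑ i, u₀ i * u i) - ∑ i, Hhat i j * u i := by
      rw [Finset.mul_sum, ← Finset.sum_sub_distrib]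
      exact Finset.sum_congr rfl fun i _ => by rw [hEij]; ring
    rw [h1, hHu, hα, hqdef]; ring
  have hup : ∑ i, u i * p i = a := by
    have h1 : ∑ i, u i * p i = σ₀ * β * (∑ i, u₀ i * u i) - σ * (∑ i, u i ^ 2) := by
      rw [Finset.mul_sum, Finset.mul_sum, ← Finset.sum_sub_distrib]
      exact Finset.sum_congr rfl fun i _ => by rw [hpdef]; ring
    rw [h1, hα, hu2, hadef]; ring
  have hqv : ∑ j, q j * v j = a := by
    have h1 : ∑ j, q j * v j = σ₀ * α * (∑ j, v₀ j * v j) - σ * (∑ j, v j ^ 2) := by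
      rw [Finset.mul_sum, Finset.mul_sum, ← Finset.sum_sub_distrib]
      exact Finset.sum_congr rfl fun j _ => by rw [hqdef]; ring
    rw [h1, hβ, hv2, hadef]; ring
  have hP2 : ∑ i, p i ^ 2 = σ₀ ^ 2 * β ^ 2 - 2 * σ₀ * β * σ * α + σ ^ 2 := by
    have h1 : ∑ i, p i ^ 2 = σ₀ ^ 2 * β ^ 2 * (∑ i, u₀ i ^ 2) - 2 * σ₀ * β * σ * (∑ i, u₀ i * u i)
        + σ ^ 2 * (∑ i, u i ^ 2) := by
      rw [Finset.mul_sum, Finset.mul_sum, Finset.mul_sum, ← Finset.sum_sub_distrib,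
        ← Finset.sum_add_distrib]
      exact Finset.sum_congr rfl fun i _ => by rw [hpdef]; ring
    rw [h1, hu02, hα, hu2]; ring
  have hQ2 : ∑ j, q j ^ 2 = σ₀ ^ 2 * α ^ 2 - 2 * σ₀ * α * σ * β + σ ^ 2 := by
    have h1 : ∑ j, q j ^ 2 = σ₀ ^ 2 * α ^ 2 * (∑ j, v₀ j ^ 2) - 2 * σ₀ * α * σ * (∑ j, v₀ j * v j)
        + σ ^ 2 * (∑ j, v j ^ 2) := by
      rw [Finset.mul_sum, Finset.mul_sum, Finset.mul_sum, ← Finset.sum_sub_distrib,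
        ← Finset.sum_add_distrib]
      exact Finset.sum_congr rfl fun j _ => by rw [hqdef]; ring
    rw [h1, hv02, hβ, hv2]; ring
  -- G = E - p vᵀ; rowwise Pythagoras
  set G : Matrix (Fin n) (Fin n) ℝ := Matrix.of fun i j => E i j - p i * v j with hGdef
  have hGij : ∀ i j, G i j = E i j - p i * v j := fun i j => rfl
  have step1 : ∀ i, ∑ j, E i j ^ 2 = ∑ j, G i j ^ 2 + p i ^ 2 := by
    intro i
    have h1 : ∑ j, G i j ^ 2 = ∑ j, E i j ^ 2 - 2 * p i * (∑ j, E i j * v j)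
        + p i ^ 2 * (∑ j, v j ^ 2) := by
      rw [Finset.mul_sum, Finset.mul_sum, ← Finset.sum_sub_distrib, ← Finset.sum_add_distrib]
      exact Finset.sum_congr rfl fun j _ => by rw [hGij]; ring
    rw [h1, hp, hv2]; ring
  have hGu : ∀ j, ∑ i, G i j * u i = q j - a * v j := by
    intro j
    have h1 : ∑ i, G i j * u i = (∑ i, E i j * u i) - (∑ i, u i * p i) * v j := by
      rw [Finset.sum_mul, ← Finset.sum_sub_distrib]
      exact Finset.sum_congr rfl fun i _ => by rw [hGij]; ring
    rw [h1, hq, hup]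
  have step2 : ∀ j, (q j - a * v j) ^ 2 ≤ ∑ i, G i j ^ 2 := by
    intro j
    have h1 : ∑ i, (G i j - (q j - a * v j) * u i) ^ 2
        = ∑ i, G i j ^ 2 - 2 * (q j - a * v j) * (∑ i, G i j * u i)
          + (q j - a * v j) ^ 2 * (∑ i, u i ^ 2) := by
      rw [Finset.mul_sum, Finset.mul_sum, ← Finset.sum_sub_distrib, ← Finset.sum_add_distrib]
      exact Finset.sum_congr rfl fun i _ => by ring
    have h2 : 0 ≤ ∑ i, (G i j - (q j - a * v j) * u i) ^ 2 :=
      Finset.sum_nonneg fun i _ => sq_nonneg _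
    rw [h1, hGu j, hu2] at h2
    nlinarith [h2]
  have hqav : ∑ j, (q j - a * v j) ^ 2 = (∑ j, q j ^ 2) - a ^ 2 := by
    have h1 : ∑ j, (q j - a * v j) ^ 2 = ∑ j, q j ^ 2 - 2 * a * (∑ j, q j * v j)
        + a ^ 2 * (∑ j, v j ^ 2) := by
      rw [Finset.mul_sum, Finset.mul_sum, ← Finset.sum_sub_distrib, ← Finset.sum_add_distrib]
      exact Finset.sum_congr rfl fun j _ => by ring
    rw [h1, hqv, hv2]; ring
  -- combine
  have hSsplit : ∑ i, ∑ j, E i j ^ 2 = (∑ i, ∑ j, G i j ^ 2) + ∑ i, p i ^ 2 := by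
    rw [← Finset.sum_add_distrib]
    exact Finset.sum_congr rfl fun i _ => step1 i
  have hGlow : (∑ j, q j ^ 2) - a ^ 2 ≤ ∑ i, ∑ j, G i j ^ 2 := by
    rw [Finset.sum_comm, ← hqav]
    exact Finset.sum_le_sum fun j _ => step2 j
  have hSlow : (∑ i, p i ^ 2) + (∑ j, q j ^ 2) - a ^ 2 ≤ ∑ i, ∑ j, E i j ^ 2 := by
    rw [hSsplit]; linarith
  have hSnn : 0 ≤ ∑ i, ∑ j, E i j ^ 2 :=
    Finset.sum_nonneg fun i _ => Finset.sum_nonneg fun j _ => sq_nonneg _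
  have hζ2 : ∑ i, ∑ j, E i j ^ 2 ≤ ζ ^ 2 := by
    have h1 : Real.sqrt (∑ i, ∑ j, E i j ^ 2) ≤ ζ := hζ
    nlinarith [Real.sq_sqrt hSnn, Real.sqrt_nonneg (∑ i, ∑ j, E i j ^ 2)]
  have htarget : (σ₀ * α * β - σ) ^ 2 + σ₀ ^ 2 * α ^ 2 * (1 - β ^ 2)
      + σ₀ ^ 2 * β ^ 2 * (1 - α ^ 2)
      = (∑ i, p i ^ 2) + (∑ j, q j ^ 2) - a ^ 2 := by
    rw [hP2, hQ2, hadef]; ring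
  calc (σ₀ * α * β - σ) ^ 2 + σ₀ ^ 2 * α ^ 2 * (1 - β ^ 2) + σ₀ ^ 2 * β ^ 2 * (1 - α ^ 2)
      = (∑ i, p i ^ 2) + (∑ j, q j ^ 2) - a ^ 2 := htarget
    _ ≤ ∑ i, ∑ j, E i j ^ 2 := hSlow
    _ ≤ ζ ^ 2 := hζ2
end

section
/- Let n ≥ 1, σ₀ > 0, and let u₀, v₀ ∈ ℝ^n be unit ℓ₂-norm vectors; set H = σ₀ u₀ v₀ᵀ. Let Ĥ ∈ ℝ^{n×n} admit a singular triple (σ, u, v) with σ > 0, and suppose ‖H − Ĥ‖_F ≤ ζ ≤ σ. If ⟨u₀, u⟩ > 0, then ⟨v₀, v⟩ > 0. -/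
open scoped BigOperators

lemma l2norm_one_sum {n : ℕ} {x : Fin n → ℝ} (h : l2norm x = 1) : ∑ i, x i ^ 2 = 1 := by
  have h0 : 0 ≤ ∑ i, x i ^ 2 := Finset.sum_nonneg fun i _ => sq_nonneg _
  have := Real.sq_sqrt h0
  rw [l2norm] at h
  rw [h] at this
  linarith

/-- if Ĥ has singular triple (σ, u, v) with σ > 0, ‖H − Ĥ‖_F ≤ ζ ≤ σ and
⟨u₀, u⟩ > 0, then ⟨v₀, v⟩ > 0. -/
theorem stmt11 {n : ℕ} (hn : 1 ≤ n) {σ₀ : ℝ} (hσ₀ : 0 < σ₀)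
    {u₀ v₀ : Fin n → ℝ} (hu₀ : l2norm u₀ = 1) (hv₀ : l2norm v₀ = 1)
    {Hhat : Matrix (Fin n) (Fin n) ℝ} {σ : ℝ} {u v : Fin n → ℝ}
    (hst : SingularTriple Hhat σ u v) (hσ : 0 < σ)
    {ζ : ℝ} (hζ : frob (outerH σ₀ u₀ v₀ - Hhat) ≤ ζ) (hζσ : ζ ≤ σ)
    (huu : 0 < inprod u₀ u) :
    0 < inprod v₀ v := by
  obtain ⟨hσnn, hu1, hv1, hMv, hMtu⟩ := hst
  set E : Matrix (Fin n) (Fin n) ℝ := outerH σ₀ u₀ v₀ - Hhat with hE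
  set a : ℝ := inprod u₀ u with ha
  set b : ℝ := inprod v₀ v with hb
  have su0 : ∑ i, u₀ i ^ 2 = 1 := l2norm_one_sum hu₀
  have sv0 : ∑ i, v₀ i ^ 2 = 1 := l2norm_one_sum hv₀
  have su : ∑ i, u i ^ 2 = 1 := l2norm_one_sum hu1
  have sv : ∑ i, v i ^ 2 = 1 := l2norm_one_sum hv1
  -- Frobenius bound
  have hζ0 : 0 ≤ ζ := le_trans (Real.sqrt_nonneg _) hζ
  have hF0 : 0 ≤ ∑ i, ∑ j, E i j ^ 2 :=
    Finset.sum_nonneg fun i _ => Finset.sum_nonneg fun j _ => sq_nonneg _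
  have hFle : ∑ i, ∑ j, E i j ^ 2 ≤ ζ ^ 2 := by
    have h1 : Real.sqrt (∑ i, ∑ j, E i j ^ 2) ≤ ζ := hζ
    nlinarith [Real.sq_sqrt hF0, Real.sqrt_nonneg (∑ i, ∑ j, E i j ^ 2)]
  -- E^T u = (σ₀ a) • v₀ - σ • v  (componentwise)
  have hEtu : ∀ i, ∑ j, E j i * u j = σ₀ * a * v₀ i - σ * v i := by
    intro i
    have h1 : ∑ j, Hhat j i * u j = σ * v i := by
      have := congrFun hMtu i
      simpa [Matrix.mulVec, Matrix.transpose, dotProduct, mul_comm] using this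
    have h2 : ∑ j, (outerH σ₀ u₀ v₀) j i * u j = σ₀ * a * v₀ i := by
      simp only [outerH, Matrix.of_apply, ha, inprod]
      rw [Finset.sum_congr rfl (fun j _ => by ring :
        ∀ j ∈ Finset.univ, σ₀ * u₀ j * v₀ i * u j = σ₀ * v₀ i * (u₀ j * u j))]
      rw [← Finset.mul_sum]
      ring
    calc ∑ j, E j i * u j
        = ∑ j, ((outerH σ₀ u₀ v₀) j i * u j - Hhat j i * u j) := by
          apply Finset.sum_congr rfl; intro j _
          simp [hE, Matrix.sub_apply]; ring
      _ = σ₀ * a * v₀ i - σ * v i := by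
          rw [Finset.sum_sub_distrib, h1, h2]
  -- norm squared of E^T u
  have hnorm : ∑ i, (σ₀ * a * v₀ i - σ * v i) ^ 2
      = σ₀ ^ 2 * a ^ 2 - 2 * σ * σ₀ * a * b + σ ^ 2 := by
    have : ∀ i ∈ Finset.univ, (σ₀ * a * v₀ i - σ * v i) ^ 2
        = (σ₀ * a) ^ 2 * v₀ i ^ 2 - 2 * σ * σ₀ * a * (v₀ i * v i) + σ ^ 2 * v i ^ 2 := by
      intro i _; ring
    rw [Finset.sum_congr rfl this]
    rw [Finset.sum_add_distrib, Finset.sum_sub_distrib, ← Finset.mul_sum, ← Finset.mul_sum,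
      ← Finset.mul_sum, sv0, sv]
    simp [hb, inprod]
    ring
  -- Cauchy-Schwarz rows: ∑ i, (∑ j, E j i * u j)^2 ≤ ∑ i ∑ j (E j i)^2
  have hcs : ∑ i, (∑ j, E j i * u j) ^ 2 ≤ ∑ i, ∑ j, E i j ^ 2 := by
    rw [Finset.sum_comm]
    apply Finset.sum_le_sum
    intro i _
    calc (∑ j, E j i * u j) ^ 2 ≤ (∑ j, E j i ^ 2) * ∑ j, u j ^ 2 :=
          Finset.sum_mul_sq_le_sq_mul_sq _ _ _
      _ = ∑ j, E j i ^ 2 := by rw [su, mul_one]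
  have key : σ₀ ^ 2 * a ^ 2 - 2 * σ * σ₀ * a * b + σ ^ 2 ≤ σ ^ 2 := by
    have h1 : ∑ i, (σ₀ * a * v₀ i - σ * v i) ^ 2 ≤ ζ ^ 2 := by
      calc ∑ i, (σ₀ * a * v₀ i - σ * v i) ^ 2 = ∑ i, (∑ j, E j i * u j) ^ 2 := by
            apply Finset.sum_congr rfl; intro i _; rw [hEtu i]
        _ ≤ ∑ i, ∑ j, E i j ^ 2 := hcs
        _ ≤ ζ ^ 2 := hFle
    nlinarith
  nlinarith [key, mul_pos (mul_pos hσ₀ huu) (mul_pos hσ₀ huu), mul_pos (mul_pos hσ hσ₀) huu]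
end

section
/- Let n ≥ 1 and let u₀ ∈ ℝ^n be entrywise nonnegative with ‖u₀‖₂ = 1, unimodal with peak at index l⁰, and satisfying ‖u₀‖₁ ≤ ρ√n for some ρ > 0. Let ζ' > 0 and let l ∈ {1,…,n} be an index with l ≤ l⁰ and Σ_{k=1}^{l−1} u₀(k) ≤ ζ'/√2. If there exists z ∈ ℝ^n with z ≥ 0 entrywise, ‖z‖₂ = 1, z unimodal with peak at l, and ⟨z, u₀⟩ ≥ ζ', then l⁰ − l < 2 ρ² n / (ζ')² − 1. -/
open scoped BigOperators

/-- Monotone non-decreasing up to the peak. -/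
lemma uni_mono_up {n : ℕ} {f : Fin n → ℝ} {l0 : Fin n}
    (h : ∀ j : ℕ, ∀ hj : j + 1 < n, j + 1 ≤ (l0 : ℕ) →
      f ⟨j, Nat.lt_of_succ_lt hj⟩ ≤ f ⟨j + 1, hj⟩) :
    ∀ i j : Fin n, i ≤ j → j ≤ l0 → f i ≤ f j := by
  have key : ∀ d : ℕ, ∀ i j : Fin n, (j : ℕ) = (i : ℕ) + d → j ≤ l0 → f i ≤ f j := by
    intro d
    induction d with
    | zero =>
      intro i j hd _
      have : i = j := Fin.ext (by omega)
      rw [this]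
    | succ d ih =>
      intro i j hd hjl
      have hjn : (j : ℕ) < n := j.isLt
      have hd0 : (i : ℕ) + d < n := by omega
      have hd1 : (i : ℕ) + d + 1 < n := by omega
      have hj'l : (⟨(i : ℕ) + d, hd0⟩ : Fin n) ≤ l0 := by
        have hjl' : (j : ℕ) ≤ (l0 : ℕ) := hjl
        simp only [Fin.le_def]
        omega
      have h1 : f i ≤ f ⟨(i : ℕ) + d, hd0⟩ := ih i ⟨(i : ℕ) + d, hd0⟩ rfl hj'l
      have h2 : f ⟨(i : ℕ) + d, hd0⟩ ≤ f ⟨(i : ℕ) + d + 1, hd1⟩ := by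
        apply h ((i : ℕ) + d) hd1
        have hjl' : (j : ℕ) ≤ (l0 : ℕ) := hjl
        omega
      have hje : j = ⟨(i : ℕ) + d + 1, hd1⟩ := Fin.ext (by simp only [Fin.val_mk]; omega)
      rw [hje]
      exact le_trans h1 h2
  intro i j hij hjl
  obtain ⟨d, hd⟩ := Nat.le.dest (show (i : ℕ) ≤ (j : ℕ) from hij)
  exact key d i j hd.symm hjl

/-- Monotone non-increasing after the peak. -/
lemma uni_mono_down {n : ℕ} {f : Fin n → ℝ} {l : Fin n}
    (h : ∀ j : ℕ, ∀ hj : j + 1 < n, (l : ℕ) ≤ j →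
      f ⟨j + 1, hj⟩ ≤ f ⟨j, Nat.lt_of_succ_lt hj⟩) :
    ∀ i j : Fin n, l ≤ i → i ≤ j → f j ≤ f i := by
  have key : ∀ d : ℕ, ∀ i j : Fin n, (j : ℕ) = (i : ℕ) + d → l ≤ i → f j ≤ f i := by
    intro d
    induction d with
    | zero =>
      intro i j hd _
      have : i = j := Fin.ext (by omega)
      rw [this]
    | succ d ih =>
      intro i j hd hli
      have hjn : (j : ℕ) < n := j.isLt
      have hd0 : (i : ℕ) + d < n := by omega
      have hd1 : (i : ℕ) + d + 1 < n := by omega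
      have h1 : f ⟨(i : ℕ) + d, hd0⟩ ≤ f i := ih i ⟨(i : ℕ) + d, hd0⟩ rfl hli
      have h2 : f ⟨(i : ℕ) + d + 1, hd1⟩ ≤ f ⟨(i : ℕ) + d, hd0⟩ := by
        apply h ((i : ℕ) + d) hd1
        have hli' : (l : ℕ) ≤ (i : ℕ) := hli
        omega
      have hje : j = ⟨(i : ℕ) + d + 1, hd1⟩ := Fin.ext (by simp only [Fin.val_mk]; omega)
      rw [hje]
      exact le_trans h2 h1
  intro i j hli hij
  obtain ⟨d, hd⟩ := Nat.le.dest (show (i : ℕ) ≤ (j : ℕ) from hij)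
  exact key d i j hd.symm hli

lemma sum_split_Iio_Ici {n : ℕ} (f : Fin n → ℝ) (l : Fin n) :
    ∑ i, f i = ∑ i ∈ Finset.Iio l, f i + ∑ i ∈ Finset.Ici l, f i := by
  rw [← Finset.sum_union]
  · congr 1
    ext i
    simp only [Finset.mem_union, Finset.mem_Iio, Finset.mem_Ici, Finset.mem_univ, true_iff]
    exact lt_or_ge i l
  · rw [Finset.disjoint_left]
    intro a ha hb
    simp only [Finset.mem_Iio] at ha
    simp only [Finset.mem_Ici] at hb
    exact absurd (lt_of_le_of_lt hb ha) (lt_irrefl _)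

lemma sum_split_Icc_Ioi {n : ℕ} (f : Fin n → ℝ) {l l0 : Fin n} (hl : l ≤ l0) :
    ∑ i ∈ Finset.Ici l, f i = ∑ i ∈ Finset.Icc l l0, f i + ∑ i ∈ Finset.Ioi l0, f i := by
  rw [← Finset.sum_union]
  · congr 1
    ext i
    simp only [Finset.mem_union, Finset.mem_Icc, Finset.mem_Ioi, Finset.mem_Ici]
    constructor
    · intro hi
      rcases le_or_gt i l0 with h | h
      · exact Or.inl ⟨hi, h⟩
      · exact Or.inr h
    · rintro (⟨h1, _⟩ | h)
      · exact h1
      · exact le_trans hl (le_of_lt h)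
  · rw [Finset.disjoint_left]
    intro a ha hb
    simp only [Finset.mem_Icc] at ha
    simp only [Finset.mem_Ioi] at hb
    exact absurd (lt_of_le_of_lt ha.2 hb) (lt_irrefl _)

lemma le_sqrt_of_sq_le' {x y : ℝ} (hx : 0 ≤ x) (h : x ^ 2 ≤ y) : x ≤ Real.sqrt y := by
  have h2 := Real.sqrt_le_sqrt h
  rwa [Real.sqrt_sq hx] at h2

/-- Two-dimensional Cauchy–Schwarz step. -/
lemma aux2d {a b c d x : ℝ} (hx : 0 ≤ x) (h : x ≤ a * c + b * d) :
    x ^ 2 ≤ (a ^ 2 + b ^ 2) * (c ^ 2 + d ^ 2) := by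
  have h1 : x ^ 2 ≤ (a * c + b * d) ^ 2 := pow_le_pow_left₀ hx h 2
  nlinarith [sq_nonneg (a * d - b * c)]

/-- the one-sided localization guarantee.  `l0` and `l` are the 0-based
versions of l⁰ and l; `Σ_{k=1}^{l−1} u₀(k)` (1-based) is the sum of the entries with
0-based index below `l`, i.e. `∑ k ∈ Finset.Iio l, u₀ k`. -/
theorem stmt14 {n : ℕ} (hn : 1 ≤ n) {u₀ : Fin n → ℝ}
    (hpos : ∀ i, 0 ≤ u₀ i) (hnorm : l2norm u₀ = 1)
    {l0 : Fin n} (huni : Unimodal u₀ l0)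
    {ρ : ℝ} (hρ : 0 < ρ) (hl1 : (∑ i, |u₀ i|) ≤ ρ * Real.sqrt n)
    {ζ' : ℝ} (hζ' : 0 < ζ')
    {l : Fin n} (hl : l ≤ l0)
    (hpre : ∑ k ∈ Finset.Iio l, u₀ k ≤ ζ' / Real.sqrt 2)
    (hfeas : ∃ z : Fin n → ℝ, (∀ i, 0 ≤ z i) ∧ l2norm z = 1 ∧ Unimodal z l ∧
      ζ' ≤ inprod z u₀) :
    ((l0 : ℕ) : ℝ) - ((l : ℕ) : ℝ) < 2 * ρ ^ 2 * n / ζ' ^ 2 - 1 := by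
  obtain ⟨z, hz0, hznorm, hzuni, hzin⟩ := hfeas
  -- monotonicity facts
  have humono : ∀ i j : Fin n, i ≤ j → j ≤ l0 → u₀ i ≤ u₀ j := uni_mono_up huni.2
  have hzdown : ∀ i j : Fin n, l ≤ i → i ≤ j → z j ≤ z i := uni_mono_down hzuni.1
  -- squared norms
  have hz2 : ∑ i, z i ^ 2 = 1 := Real.sqrt_eq_one.mp hznorm
  -- named quantities
  set pre := Finset.Iio l with hpre_def
  set mid := Finset.Icc l l0 with hmid_def
  set post := Finset.Ioi l0 with hpost_def
  set a2 := ∑ i ∈ pre, z i ^ 2 with ha2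
  set b2 := ∑ i ∈ Finset.Ici l, z i ^ 2 with hb2
  set c2 := ∑ i ∈ pre, u₀ i ^ 2 with hc2
  set P := ∑ i ∈ pre, u₀ i with hP
  set T := ∑ i ∈ Finset.Ici l, u₀ i with hT
  set T1 := ∑ i ∈ mid, u₀ i with hT1
  set T2 := ∑ i ∈ post, u₀ i with hT2
  set Z1 := ∑ i ∈ mid, z i with hZ1
  set A := ∑ i ∈ pre, z i * u₀ i with hA
  set B1 := ∑ i ∈ mid, z i * u₀ i with hB1
  set B2 := ∑ i ∈ post, z i * u₀ i with hB2
  have hab : a2 + b2 = 1 := by rw [ha2, hb2, ← sum_split_Iio_Ici]; exact hz2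
  have hTsplit : T = T1 + T2 := by rw [hT, hT1, hT2]; exact sum_split_Icc_Ioi _ hl
  have hABsplit : inprod z u₀ = A + (B1 + B2) := by
    rw [hA, hB1, hB2, inprod, sum_split_Iio_Ici (fun i => z i * u₀ i) l,
      sum_split_Icc_Ioi (fun i => z i * u₀ i) hl]
  -- nonnegativity
  have ha2nn : 0 ≤ a2 := Finset.sum_nonneg fun i _ => sq_nonneg _
  have hb2nn : 0 ≤ b2 := Finset.sum_nonneg fun i _ => sq_nonneg _
  have hc2nn : 0 ≤ c2 := Finset.sum_nonneg fun i _ => sq_nonneg _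
  have hPnn : 0 ≤ P := Finset.sum_nonneg fun i _ => hpos i
  have hTnn : 0 ≤ T := Finset.sum_nonneg fun i _ => hpos i
  have hT1nn : 0 ≤ T1 := Finset.sum_nonneg fun i _ => hpos i
  have hT2nn : 0 ≤ T2 := Finset.sum_nonneg fun i _ => hpos i
  have hZ1nn : 0 ≤ Z1 := Finset.sum_nonneg fun i _ => hz0 i
  -- cardinality of mid
  have hcard : (mid.card : ℝ) = ((l0 : ℕ) : ℝ) - ((l : ℕ) : ℝ) + 1 := by
    rw [hmid_def, Fin.card_Icc]
    have hll : (l : ℕ) ≤ (l0 : ℕ) := hl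
    push_cast [Nat.cast_sub (by omega : (l : ℕ) ≤ (l0 : ℕ) + 1)]
    ring
  set m : ℝ := (mid.card : ℝ) with hm
  have hm1 : 1 ≤ m := by
    rw [hcard]
    have hll : (l : ℕ) ≤ (l0 : ℕ) := hl
    have hcast : ((l : ℕ) : ℝ) ≤ ((l0 : ℕ) : ℝ) := Nat.cast_le.mpr hll
    linarith
  have hmpos : 0 < m := lt_of_lt_of_le one_pos hm1
  -- mid sums of squares bounded by b2
  have hmidsub : mid ⊆ Finset.Ici l := by
    intro i hi
    rw [hmid_def, Finset.mem_Icc] at hi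
    rw [Finset.mem_Ici]
    exact hi.1
  have hb1le : ∑ i ∈ mid, z i ^ 2 ≤ b2 :=
    Finset.sum_le_sum_of_subset_of_nonneg hmidsub fun i _ _ => sq_nonneg _
  -- (A) Cauchy-Schwarz on the prefix
  have hAle : A ^ 2 ≤ a2 * c2 := by
    rw [hA, ha2, hc2]
    exact Finset.sum_mul_sq_le_sq_mul_sq pre z u₀
  have hAnn : 0 ≤ A := Finset.sum_nonneg fun i _ => mul_nonneg (hz0 i) (hpos i)
  -- (B1) Chebyshev on mid
  have hanti : AntivaryOn z u₀ (mid : Set (Fin n)) := by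
    intro i hi j hj hij
    simp only [hmid_def, Finset.coe_Icc, Set.mem_Icc] at hi hj
    rcases le_or_gt j i with h | h
    · exact absurd (humono j i h hi.2) (not_le.mpr hij)
    · exact hzdown i j hi.1 (le_of_lt h)
  have hCheb : m * B1 ≤ Z1 * T1 := hanti.card_mul_sum_le_sum_mul_sum
  have hZ1sq : Z1 ^ 2 ≤ m * b2 := by
    calc Z1 ^ 2 ≤ mid.card * ∑ i ∈ mid, z i ^ 2 := sq_sum_le_card_mul_sum_sq
    _ ≤ m * b2 := by
        rw [hm]
        exact mul_le_mul_of_nonneg_left hb1le (Nat.cast_nonneg _)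
  -- (B2) uniform bound after l0
  have hzl0nn : 0 ≤ z l0 := hz0 l0
  have hzl0sq : m * z l0 ^ 2 ≤ b2 := by
    have h1 : mid.card • (z l0 ^ 2) ≤ ∑ i ∈ mid, z i ^ 2 := by
      apply Finset.card_nsmul_le_sum
      intro i hi
      rw [hmid_def, Finset.mem_Icc] at hi
      exact pow_le_pow_left₀ hzl0nn (hzdown i l0 hi.1 hi.2) 2
    rw [nsmul_eq_mul] at h1
    exact le_trans h1 hb1le
  have hB2le : B2 ≤ z l0 * T2 := by
    rw [hB2, hT2, Finset.mul_sum]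
    apply Finset.sum_le_sum
    intro i hi
    rw [hpost_def, Finset.mem_Ioi] at hi
    exact mul_le_mul_of_nonneg_right (hzdown l0 i hl (le_of_lt hi)) (hpos i)
  -- main chain: s * ζ' ≤ aa * (s * cc) + bb * T with s = √m etc.
  set s := Real.sqrt m with hs
  set aa := Real.sqrt a2 with haa
  set bb := Real.sqrt b2 with hbb
  set cc := Real.sqrt c2 with hcc
  have hs2 : s ^ 2 = m := Real.sq_sqrt (le_of_lt hmpos)
  have hspos : 0 < s := Real.sqrt_pos.mpr hmpos
  have haa2 : aa ^ 2 = a2 := Real.sq_sqrt ha2nn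
  have hbb2 : bb ^ 2 = b2 := Real.sq_sqrt hb2nn
  have hcc2 : cc ^ 2 = c2 := Real.sq_sqrt hc2nn
  have haann : 0 ≤ aa := Real.sqrt_nonneg _
  have hbbnn : 0 ≤ bb := Real.sqrt_nonneg _
  have hccnn : 0 ≤ cc := Real.sqrt_nonneg _
  have hAac : A ≤ aa * cc := by
    have h1 : A ≤ Real.sqrt (a2 * c2) := le_sqrt_of_sq_le' hAnn hAle
    rwa [Real.sqrt_mul ha2nn] at h1
  have hZ1sb : Z1 ≤ s * bb := by
    have h1 : Z1 ≤ Real.sqrt (m * b2) := le_sqrt_of_sq_le' hZ1nn hZ1sq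
    rwa [Real.sqrt_mul (le_of_lt hmpos)] at h1
  have hzl0sb : s * z l0 ≤ bb := by
    have h1 : (s * z l0) ^ 2 ≤ b2 := by
      have : (s * z l0) ^ 2 = m * z l0 ^ 2 := by rw [mul_pow, hs2]
      rw [this]; exact hzl0sq
    have h2 : s * z l0 ≤ Real.sqrt b2 :=
      le_sqrt_of_sq_le' (mul_nonneg (le_of_lt hspos) hzl0nn) h1
    exact h2
  have hsB1 : s * B1 ≤ bb * T1 := by
    have h1 : m * B1 ≤ s * bb * T1 :=
      le_trans hCheb (mul_le_mul_of_nonneg_right hZ1sb hT1nn)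
    have h2 : s * (s * B1) = m * B1 := by rw [← hs2]; ring
    have h3 : s * (s * B1) ≤ s * (bb * T1) := by
      rw [h2]
      calc m * B1 ≤ s * bb * T1 := h1
      _ = s * (bb * T1) := by ring
    exact le_of_mul_le_mul_left h3 hspos
  have hsB2 : s * B2 ≤ bb * T2 := by
    calc s * B2 ≤ s * (z l0 * T2) := mul_le_mul_of_nonneg_left hB2le (le_of_lt hspos)
    _ = (s * z l0) * T2 := by ring
    _ ≤ bb * T2 := mul_le_mul_of_nonneg_right hzl0sb hT2nn
  have hmain : s * ζ' ≤ aa * (s * cc) + bb * T := by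
    have h0 : ζ' ≤ A + (B1 + B2) := le_of_le_of_eq hzin hABsplit
    have h1 : s * ζ' ≤ s * (A + (B1 + B2)) :=
      mul_le_mul_of_nonneg_left h0 (le_of_lt hspos)
    have h2 : s * (A + (B1 + B2)) = s * A + (s * B1 + s * B2) := by ring
    have h3 : s * A ≤ s * (aa * cc) := mul_le_mul_of_nonneg_left hAac (le_of_lt hspos)
    have h4 : s * (aa * cc) = aa * (s * cc) := by ring
    have h5 : bb * T = bb * T1 + bb * T2 := by rw [hTsplit]; ring
    linarith
  -- square it: m ζ'² ≤ m c2 + T²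
  have hsq : m * ζ' ^ 2 ≤ m * c2 + T ^ 2 := by
    have h1 : (s * ζ') ^ 2 ≤ (aa ^ 2 + bb ^ 2) * ((s * cc) ^ 2 + T ^ 2) :=
      aux2d (mul_nonneg (le_of_lt hspos) (le_of_lt hζ')) hmain
    have h2 : (s * ζ') ^ 2 = m * ζ' ^ 2 := by rw [mul_pow, hs2]
    have h3 : (s * cc) ^ 2 = m * c2 := by rw [mul_pow, hs2, hcc2]
    have h4 : aa ^ 2 + bb ^ 2 = 1 := by rw [haa2, hbb2]; exact hab
    rw [h2, h3, h4, one_mul] at h1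
    exact h1
  -- m c2 ≤ T * P
  have hc2ul : c2 ≤ u₀ l * P := by
    rw [hc2, hP, Finset.mul_sum]
    apply Finset.sum_le_sum
    intro i hi
    rw [hpre_def, Finset.mem_Iio] at hi
    have h1 : u₀ i ≤ u₀ l := humono i l (le_of_lt hi) hl
    have h2 : u₀ i * u₀ i ≤ u₀ l * u₀ i := mul_le_mul_of_nonneg_right h1 (hpos i)
    calc u₀ i ^ 2 = u₀ i * u₀ i := by ring
    _ ≤ u₀ l * u₀ i := h2
  have hmul : m * u₀ l ≤ T1 := by
    have h1 : mid.card • u₀ l ≤ T1 := by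
      apply Finset.card_nsmul_le_sum
      intro i hi
      rw [hmid_def, Finset.mem_Icc] at hi
      exact humono l i hi.1 hi.2
    rwa [nsmul_eq_mul] at h1
  have hT1T : T1 ≤ T := by rw [hTsplit]; linarith
  have hmc2 : m * c2 ≤ T * P := by
    have h1 : m * c2 ≤ m * (u₀ l * P) := mul_le_mul_of_nonneg_left hc2ul (le_of_lt hmpos)
    have h2 : m * (u₀ l * P) = (m * u₀ l) * P := by ring
    have h3 : (m * u₀ l) * P ≤ T1 * P := mul_le_mul_of_nonneg_right hmul hPnn
    have h4 : T1 * P ≤ T * P := mul_le_mul_of_nonneg_right hT1T hPnn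
    linarith
  -- ℓ1 bound
  have hl1' : P + T ≤ ρ * Real.sqrt n := by
    have h1 : ∑ i, |u₀ i| = ∑ i, u₀ i :=
      Finset.sum_congr rfl fun i _ => abs_of_nonneg (hpos i)
    have h2 : ∑ i, u₀ i = P + T := by rw [hP, hT]; exact sum_split_Iio_Ici u₀ l
    have h3 := hl1
    rw [h1, h2] at h3
    exact h3
  have hfin : m * ζ' ^ 2 ≤ ρ ^ 2 * n := by
    have h1 : m * ζ' ^ 2 ≤ T * P + T ^ 2 := by linarith [hsq, hmc2]
    have h2 : T * P + T ^ 2 = T * (P + T) := by ring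
    have h3 : T * (P + T) ≤ (ρ * Real.sqrt n) * (ρ * Real.sqrt n) := by
      apply mul_le_mul (le_trans (by linarith) hl1') hl1' (by linarith)
      positivity
    have h4 : (ρ * Real.sqrt n) * (ρ * Real.sqrt n) = ρ ^ 2 * n := by
      have h5 : Real.sqrt n ^ 2 = n := Real.sq_sqrt (Nat.cast_nonneg n)
      calc (ρ * Real.sqrt n) * (ρ * Real.sqrt n) = ρ ^ 2 * Real.sqrt n ^ 2 := by ring
      _ = ρ ^ 2 * n := by rw [h5]
    linarith
  -- conclude
  have hnpos : (0 : ℝ) < n := by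
    have h1 : (1 : ℝ) ≤ n := by exact_mod_cast hn
    linarith
  have hstrict : m * ζ' ^ 2 < 2 * ρ ^ 2 * n := by
    have h1 : 0 < ρ ^ 2 * n := by positivity
    linarith
  have hζ2 : 0 < ζ' ^ 2 := by positivity
  have hmlt : m < 2 * ρ ^ 2 * n / ζ' ^ 2 := by
    rw [lt_div_iff₀ hζ2]
    linarith
  rw [hcard] at hmlt
  linarith
end
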